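/- Mechanism 1 does not Nash-implement maxmin welfare: in the instance with n agents and n goods each of supply 1, where agent i's true desired set is R̃_i = {i}, the report profile in which every agent reports the full set M = {1,…,n} is a Nash equilibrium of Mechanism 1 (no agent can strictly increase her true utility by unilaterally changing her report), and its outcome gives every agent true utility 1/n, whereas the maxmin-optimal value is 1. -/

import Mathlib

open scoped Classical
open Real

namespace BandwidthAlloc

/-- A bid: `none` denotes the special bid β; `some r` denotes the real bid `r ≥ 0`. -/
abbrev Bid := Option NNReal

/-- Numeric value of a bid (β is treated as 0 in arithmetic). -/
noncomputable def bval (b : Bid) : ℝ := ((b.getD 0 : NNReal) : ℝ)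

/-- A bid is positive when it is neither 0 nor β. -/
def posBid (b : Bid) : Prop := 0 < bval b

/-- Utility of the bundle `xi` for an agent with desired set `Ri`: `min_{j ∈ Ri} xi j`. -/
noncomputable def bundleUtil {m : ℕ} (Ri : Finset (Fin m)) (xi : Fin m → ℝ) : ℝ :=
  sInf (xi '' (Ri : Set (Fin m)))

/-- Bandwidth-allocation utility of agent `i` under allocation `x`. -/
noncomputable def util {n m : ℕ} (R : Fin n → Finset (Fin m))
    (x : Fin n → Fin m → ℝ) (i : Fin n) : ℝ :=
  bundleUtil (R i) (x i)

/-- Weights: `w R i j = 1` iff `j ∈ R i`, else `0`. -/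
noncomputable def w {n m : ℕ} (R : Fin n → Finset (Fin m)) (i : Fin n) (j : Fin m) : ℝ :=
  if j ∈ R i then 1 else 0

/-- A valid (nonnegative, supply-respecting) allocation. -/
def validAlloc {n m : ℕ} (s : Fin m → ℝ) (x : Fin n → Fin m → ℝ) : Prop :=
  (∀ i j, 0 ≤ x i j) ∧ ∀ j, ∑ i, x i j ≤ s j

/-- CES welfare of the utility vector `v` (`ρ = 0` is Nash welfare; for `ρ < 0` a zero
utility yields welfare `0`, the limiting convention). -/
noncomputable def ces (ρ : ℝ) {n : ℕ} (v : Fin n → ℝ) : ℝ :=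
  if ρ = 0 then ∏ i, v i
  else if ρ < 0 ∧ ∃ i, v i = 0 then 0
  else (∑ i, v i ^ ρ) ^ (1 / ρ)

/-- `Ψ_ρ`: `x` is a valid allocation maximizing CES welfare among valid allocations. -/
def maxCES (ρ : ℝ) {n m : ℕ} (s : Fin m → ℝ) (R : Fin n → Finset (Fin m))
    (x : Fin n → Fin m → ℝ) : Prop :=
  validAlloc s x ∧ ∀ y, validAlloc s y → ces ρ (util R y) ≤ ces ρ (util R x)

/-- Constraint curve: continuous, normalized, strictly increasing, nonnegative on `[0,∞)`. -/
def IsConstraintCurve (f : ℝ → ℝ) : Prop :=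
  ContinuousOn f (Set.Ici 0) ∧ f 0 = 0 ∧ StrictMonoOn f (Set.Ici 0) ∧
    ∀ y ∈ Set.Ici (0 : ℝ), 0 ≤ f y

/-- `g` is identically zero on `[0,∞)`. -/
def zeroOn (g : ℝ → ℝ) : Prop := ∀ y ∈ Set.Ici (0 : ℝ), g y = 0

/-- Price curve: continuous, normalized, nonnegative, and either strictly increasing or
identically zero on `[0,∞)`. -/
def IsPriceCurve (g : ℝ → ℝ) : Prop :=
  ContinuousOn g (Set.Ici 0) ∧ g 0 = 0 ∧ (∀ y ∈ Set.Ici (0 : ℝ), 0 ≤ g y) ∧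
    (StrictMonoOn g (Set.Ici 0) ∨ zeroOn g)

/-- Cost of the bundle `xi` under price curves `g`. -/
noncomputable def cost {m : ℕ} (g : Fin m → ℝ → ℝ) (xi : Fin m → ℝ) : ℝ :=
  ∑ j, g j (xi j)

/-- `xi` is in the demand set of an agent with desired set `Ri` under price curves `g`. -/
def inDemand {m : ℕ} (g : Fin m → ℝ → ℝ) (Ri : Finset (Fin m)) (xi : Fin m → ℝ) : Prop :=
  (∀ j, 0 ≤ xi j) ∧ cost g xi ≤ 1 ∧
    ∀ yi : Fin m → ℝ, (∀ j, 0 ≤ yi j) → cost g yi ≤ 1 → bundleUtil Ri yi ≤ bundleUtil Ri xi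

/-- Price curve equilibrium. -/
def isPCE {n m : ℕ} (s : Fin m → ℝ) (R : Fin n → Finset (Fin m))
    (x : Fin n → Fin m → ℝ) (g : Fin m → ℝ → ℝ) : Prop :=
  (∀ i, inDemand g (R i) (x i)) ∧ (∀ j, ∑ i, x i j ≤ s j) ∧
    ∀ j, ¬ zeroOn (g j) → ∑ i, x i j = s j

/-- Step 1 of the ATP allocation rule: proportional sharing. -/
noncomputable def atp1 {n m : ℕ} (s : Fin m → ℝ) (b : Fin n → Fin m → Bid)
    (i : Fin n) (j : Fin m) : ℝ :=
  bval (b i j) / (∑ k, bval (b k j)) * s j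

/-- Steps 1–2 of the ATP allocation rule: goods with a positive bid are shared
proportionally; on a good where everyone bids `0` or `β`, an agent bidding `β` receives
as much as she receives of some fixed good on which she bids positively. -/
noncomputable def atp2 {n m : ℕ} (s : Fin m → ℝ) (b : Fin n → Fin m → Bid)
    (i : Fin n) (j : Fin m) : ℝ :=
  if ∃ k, posBid (b k j) then atp1 s b i j
  else if b i j = none then
    (if h : ∃ ℓ, posBid (b i ℓ) then atp1 s b i (Classical.choose h) else 0)
  else 0

/-- The full ATP allocation rule (steps 1–3): agents bidding `β` on an oversubscribed
step-2 good are penalized with the zero bundle. -/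
noncomputable def atp {n m : ℕ} (s : Fin m → ℝ) (b : Fin n → Fin m → Bid)
    (i : Fin n) (j : Fin m) : ℝ :=
  if ∃ ℓ, (¬ ∃ k, posBid (b k ℓ)) ∧ b i ℓ = none ∧ s ℓ < ∑ k, atp2 s b k ℓ then 0
  else atp2 s b i j

/-- Total bid-constraint cost `C_f(b_i)` of agent `i`'s bid vector. -/
noncomputable def bidCost {m : ℕ} (f : Fin m → ℝ → ℝ) (bi : Fin m → Bid) : ℝ :=
  ∑ j, f j (bval (bi j))

/-- A bid vector is feasible if it obeys the bid constraint `C_f(b_i) ≤ 1`. -/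
def feasibleBid {m : ℕ} (f : Fin m → ℝ → ℝ) (bi : Fin m → Bid) : Prop :=
  bidCost f bi ≤ 1

/-- `b` is a Nash equilibrium of `ATP(f)`: all bids are feasible and no agent can
strictly increase her utility by a unilateral feasible deviation. -/
def isNE {n m : ℕ} (s : Fin m → ℝ) (f : Fin m → ℝ → ℝ)
    (R : Fin n → Finset (Fin m)) (b : Fin n → Fin m → Bid) : Prop :=
  (∀ i, feasibleBid f (b i)) ∧
    ∀ (i : Fin n) (bi' : Fin m → Bid), feasibleBid f bi' →
      util R (atp s (Function.update b i bi')) i ≤ util R (atp s b) i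

/-- `NE_X(ATP(f))`: allocations arising from Nash equilibrium bid profiles. -/
def NEX {n m : ℕ} (s : Fin m → ℝ) (f : Fin m → ℝ → ℝ)
    (R : Fin n → Finset (Fin m)) : Set (Fin n → Fin m → ℝ) :=
  {x | ∃ b, isNE s f R b ∧ x = atp s b}

/-- `f` is homogeneous of degree `α` on the nonnegative reals. -/
def Homog (f : ℝ → ℝ) (α : ℝ) : Prop :=
  ∀ c ≥ (0 : ℝ), ∀ y ≥ (0 : ℝ), f (c * y) = c ^ α * f y

/-- `γ* = max {γ ≥ 0 : γ · Σ_i w_{ij} ≤ s_j for all j}` of Mechanism 1. -/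
noncomputable def gammaStar {n m : ℕ} (s : Fin m → ℝ) (R : Fin n → Finset (Fin m)) : ℝ :=
  sSup {γ : ℝ | 0 ≤ γ ∧ ∀ j, γ * ∑ i, w R i j ≤ s j}

/-- Mechanism 1: `x i j = γ* · w i j`. -/
noncomputable def mech1 {n m : ℕ} (s : Fin m → ℝ) (R : Fin n → Finset (Fin m)) :
    Fin n → Fin m → ℝ :=
  fun i j => gammaStar s R * w R i j

/-- `min_i u_i(x_i)`. -/
noncomputable def minUtil {n m : ℕ} (R : Fin n → Finset (Fin m))
    (x : Fin n → Fin m → ℝ) : ℝ :=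
  sInf (Set.range fun i => util R x i)

/-- `x` is maxmin-optimal: valid and attaining the maximum of `min_i u_i` over valid
allocations. -/
def maxminOptimal {n m : ℕ} (s : Fin m → ℝ) (R : Fin n → Finset (Fin m))
    (x : Fin n → Fin m → ℝ) : Prop :=
  validAlloc s x ∧ ∀ y, validAlloc s y → minUtil R y ≤ minUtil R x

/-- Mechanism 2: `P i k` is the set agent `i` claims agent `k` desires.
`eta P i = |{k : R_k(k) ≠ R_k(i)}|`. -/
noncomputable def eta {n m : ℕ} (P : Fin n → Fin n → Finset (Fin m)) (i : Fin n) : ℕ :=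
  (Finset.univ.filter fun k => P k k ≠ P i k).card

/-- Agent `i` is in `N̄`: for some `k`, `R_k(k) ⊊ R_k(i)`. -/
def inNbar {n m : ℕ} (P : Fin n → Fin n → Finset (Fin m)) (i : Fin n) : Prop :=
  ∃ k, P k k ⊂ P i k

/-- The penalty factor `α_i` of Mechanism 2. -/
noncomputable def alpha {n m : ℕ} (P : Fin n → Fin n → Finset (Fin m)) (i : Fin n) : ℝ :=
  if inNbar P i then 0 else 1 - (eta P i : ℝ) / n

/-- Effective reported sets of Mechanism 2: agents in `N̄` are replaced by `∅`. -/
noncomputable def effSets {n m : ℕ} (P : Fin n → Fin n → Finset (Fin m)) :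
    Fin n → Finset (Fin m) :=
  fun i => if inNbar P i then ∅ else P i i

/-- Mechanism 2: the allocation `x_i = α_i · y_i` where `y` is the Mechanism 1 outcome
on the effective sets. -/
noncomputable def mech2 {n m : ℕ} (s : Fin m → ℝ) (P : Fin n → Fin n → Finset (Fin m)) :
    Fin n → Fin m → ℝ :=
  fun i j => alpha P i * mech1 s (effSets P) i j


/-! Mechanism 1 gives every agent the same amount `γ*` of each good she reports, and `γ*` is
fixed by the most demanded good. When everyone else reports all goods, any nonempty report of
agent `i` leaves some good demanded by all `n` agents, so `γ* = 1/n` whatever she reports; her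
true utility is then `1/n` or `0`. Truthful singleton bundles, by contrast, give everyone `1`. -/

section Utility

variable {m : ℕ}

lemma bundleUtil_singleton (j : Fin m) (xi : Fin m → ℝ) : bundleUtil {j} xi = xi j := by
  simp [bundleUtil]

lemma bundleUtil_le {Ri : Finset (Fin m)} {j : Fin m} (hj : j ∈ Ri) (xi : Fin m → ℝ) :
    bundleUtil Ri xi ≤ xi j :=
  csInf_le ((Ri.finite_toSet.image xi).bddBelow) ⟨j, hj, rfl⟩

variable {n : ℕ}

lemma minUtil_le_util (R : Fin n → Finset (Fin m)) (x : Fin n → Fin m → ℝ) (i : Fin n) :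
    minUtil R x ≤ util R x i :=
  csInf_le (Set.finite_range _).bddBelow ⟨i, rfl⟩

lemma minUtil_eq_of_forall_util_eq [NeZero n] {R : Fin n → Finset (Fin m)}
    {x : Fin n → Fin m → ℝ} {c : ℝ} (h : ∀ i, util R x i = c) : minUtil R x = c := by
  rw [minUtil, funext h, Set.range_const, csInf_singleton]

lemma validAlloc.le_supply {s : Fin m → ℝ} {x : Fin n → Fin m → ℝ} (hx : validAlloc s x)
    (i : Fin n) (j : Fin m) : x i j ≤ s j :=
  (Finset.single_le_sum (fun k _ => hx.1 k j) (Finset.mem_univ i)).trans (hx.2 j)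

end Utility

section Mechanism1

variable {n m : ℕ}

lemma sum_w_le_card (R : Fin n → Finset (Fin m)) (j : Fin m) : ∑ i, w R i j ≤ n := by
  calc ∑ i, w R i j ≤ ∑ _i : Fin n, (1 : ℝ) :=
        Finset.sum_le_sum fun i _ => by unfold w; split_ifs <;> norm_num
    _ = n := by simp

lemma sum_w_eq_card {R : Fin n → Finset (Fin m)} {j : Fin m} (hj : ∀ i, j ∈ R i) :
    ∑ i, w R i j = n := by
  simp [w, hj]

lemma gammaStar_nonneg (s : Fin m → ℝ) (R : Fin n → Finset (Fin m)) : 0 ≤ gammaStar s R :=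
  Real.sSup_nonneg fun _ hγ => hγ.1

lemma gammaStar_const_of_common_good (hn : 0 < n) {c : ℝ} (hc : 0 ≤ c)
    {R : Fin n → Finset (Fin m)} {j₀ : Fin m} (hj₀ : ∀ i, j₀ ∈ R i) :
    gammaStar (fun _ => c) R = c / n := by
  have hn' : (0 : ℝ) < n := Nat.cast_pos.mpr hn
  refine IsGreatest.csSup_eq ⟨⟨by positivity, fun j => ?_⟩, fun γ hγ => ?_⟩
  · calc c / n * ∑ i, w R i j ≤ c / n * n :=
          mul_le_mul_of_nonneg_left (sum_w_le_card R j) (by positivity)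
      _ = c := div_mul_cancel₀ c hn'.ne'
  · have hγj₀ := hγ.2 j₀
    rw [sum_w_eq_card hj₀] at hγj₀
    exact (le_div_iff₀ hn').mpr hγj₀

lemma mech1_of_mem {s : Fin m → ℝ} {R : Fin n → Finset (Fin m)} {i : Fin n} {j : Fin m}
    (hj : j ∈ R i) : mech1 s R i j = gammaStar s R := by
  simp [mech1, w, hj]

lemma mech1_le_gammaStar (s : Fin m → ℝ) (R : Fin n → Finset (Fin m)) (i : Fin n)
    (j : Fin m) : mech1 s R i j ≤ gammaStar s R := by
  unfold mech1 w
  split_ifs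
  · rw [mul_one]
  · rw [mul_zero]; exact gammaStar_nonneg s R

lemma exists_common_good_update_univ {i : Fin n} {Ri : Finset (Fin m)} (hRi : Ri.Nonempty) :
    ∃ j, ∀ k, j ∈ Function.update (fun _ => Finset.univ) i Ri k := by
  obtain ⟨j, hj⟩ := hRi
  refine ⟨j, fun k => ?_⟩
  rcases eq_or_ne k i with rfl | hk
  · simpa using hj
  · simp [Function.update_of_ne hk]

end Mechanism1

lemma isGreatest_maxmin_singletons {n : ℕ} (hn : 0 < n) :
    IsGreatest
      {v : ℝ | ∃ y, validAlloc (fun _ => 1) y ∧ v = minUtil (fun i : Fin n => {i}) y} 1 := by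
  have : NeZero n := ⟨hn.ne'⟩
  let diag : Fin n → Fin n → ℝ := fun i j => if i = j then 1 else 0
  have hdiag_nonneg : ∀ i j, 0 ≤ diag i j := fun i j => by
    dsimp only [diag]; split_ifs <;> norm_num
  refine ⟨⟨diag, ⟨hdiag_nonneg, fun j => ?_⟩, ?_⟩, ?_⟩
  · simp [diag]
  · exact (minUtil_eq_of_forall_util_eq fun i => by simp [util, diag, bundleUtil_singleton]).symm
  · rintro v ⟨y, hy, rfl⟩
    calc minUtil (fun i => {i}) y ≤ util (fun i => {i}) y 0 := minUtil_le_util _ y 0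
      _ ≤ y 0 0 := bundleUtil_le (Finset.mem_singleton_self 0) (y 0)
      _ ≤ 1 := hy.le_supply 0 0

/-- Mechanism 1 does not Nash-implement maxmin welfare: with `n` agents,
`n` goods of supply 1 and true sets `R̃_i = {i}`, all agents reporting the full set `M`
is a Nash equilibrium whose outcome gives every agent true utility `1/n`, while the
maxmin-optimal value is `1`. -/
theorem mech1_not_nash_implementation (n : ℕ) (hn : 0 < n) :
    let s : Fin n → ℝ := fun _ => 1
    let Rt : Fin n → Finset (Fin n) := fun i => {i}
    let Rr : Fin n → Finset (Fin n) := fun _ => Finset.univ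
    (∀ (i : Fin n) (Ri' : Finset (Fin n)), Ri'.Nonempty →
        bundleUtil (Rt i) (mech1 s (Function.update Rr i Ri') i) ≤
          bundleUtil (Rt i) (mech1 s Rr i)) ∧
      (∀ i, bundleUtil (Rt i) (mech1 s Rr i) = 1 / (n : ℝ)) ∧
      IsGreatest {v : ℝ | ∃ y, validAlloc s y ∧ v = minUtil Rt y} 1 := by
  intro s Rt Rr
  have hγ : gammaStar s Rr = 1 / n :=
    gammaStar_const_of_common_good hn zero_le_one (j₀ := ⟨0, hn⟩) fun _ => Finset.mem_univ _
  have hEq : ∀ i, bundleUtil (Rt i) (mech1 s Rr i) = 1 / (n : ℝ) := fun i => by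
    rw [bundleUtil_singleton, mech1_of_mem (Finset.mem_univ i), hγ]
  refine ⟨fun i Ri' hRi' => ?_, hEq, ?_⟩
  · obtain ⟨j₀, hj₀⟩ := exists_common_good_update_univ (i := i) hRi'
    rw [hEq, bundleUtil_singleton, ← gammaStar_const_of_common_good hn zero_le_one hj₀]
    exact mech1_le_gammaStar _ _ i i
  · exact isGreatest_maxmin_singletons hn

end BandwidthAlloc
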